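/- Let f ∈ C[0,1] with p = P_{𝒫ₙ}(f), and let γ ∈ C*[0,1] satisfy ⟨γ, f − p⟩ < 0. Then for every μ ∈ C*[0,1], γ does not belong to the regular coderivative D̂*P_{𝒫ₙ}(f)(μ). -/

import Mathlib

/-!
Best approximations from the polynomials of degree `≤ n` in `C[0,1]` are unique: the midpoint
of two of them is again one, its extremal points are zeros of their difference, and interpolating
the error there gives a strictly better polynomial (Kolmogorov's criterion). Hence `P` is
constant, equal to `p = P f`, on the segment from `f` to `p`. Along that segment the difference
quotient of the coderivative equals `⟨γ, p − f⟩ / ‖p − f‖ > 0`, so its `limsup` is positive.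
-/

/-- The subspace `𝒫ₙ ⊆ C[0,1]` of (restrictions of) real polynomials of degree `≤ n`. -/
def Pn (n : ℕ) : Set C(Set.Icc (0 : ℝ) 1, ℝ) :=
  {g | ∃ p : Polynomial ℝ, p.natDegree ≤ n ∧ ∀ t : Set.Icc (0 : ℝ) 1, g t = p.eval (t : ℝ)}

/-- `inCoderiv P f μ φ` says that `φ` belongs to the Fréchet (regular Mordukhovich)
coderivative `D̂*P(f)(μ)` of the single-valued map `P` at `f`:
`limsup_{g→f, g≠f} (⟨φ, g−f⟩ − ⟨μ, P(g)−P(f)⟩)/(‖g−f‖+‖P(g)−P(f)‖) ≤ 0`. -/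
def inCoderiv (P : C(Set.Icc (0 : ℝ) 1, ℝ) → C(Set.Icc (0 : ℝ) 1, ℝ))
    (f : C(Set.Icc (0 : ℝ) 1, ℝ))
    (μ φ : StrongDual ℝ C(Set.Icc (0 : ℝ) 1, ℝ)) : Prop :=
  Filter.limsup
    (fun g => (φ (g - f) - μ (P g - P f)) / (‖g - f‖ + ‖P g - P f‖))
    (nhdsWithin f {f}ᶜ) ≤ 0

open Filter Polynomial Set Topology

def IsBestApprox {E : Type*} [SeminormedAddCommGroup E] (S : Set E) (g p : E) : Prop :=
  p ∈ S ∧ ∀ r ∈ S, ‖g - p‖ ≤ ‖g - r‖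

theorem IsBestApprox.norm_sub_eq {E : Type*} [SeminormedAddCommGroup E] {S : Set E} {g p r : E}
    (hp : IsBestApprox S g p) (hr : IsBestApprox S g r) : ‖g - p‖ = ‖g - r‖ :=
  le_antisymm (hp.2 r hr.1) (hr.2 p hp.1)

section BestApprox

variable {E : Type*} [NormedAddCommGroup E] [NormedSpace ℝ E]

theorem IsBestApprox.add_smul_sub {S : Set E} {f p : E} (hp : IsBestApprox S f p) {t : ℝ}
    (ht0 : 0 ≤ t) (ht1 : t ≤ 1) : IsBestApprox S (f + t • (p - f)) p := by
  refine ⟨hp.1, fun r hr => ?_⟩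
  have hgp : f + t • (p - f) - p = (1 - t) • (f - p) := by module
  have hfg : f - (f + t • (p - f)) = t • (f - p) := by module
  calc ‖f + t • (p - f) - p‖ = ‖f - p‖ - t * ‖f - p‖ := by
        rw [hgp, norm_smul, Real.norm_of_nonneg (by linarith)]; ring
    _ ≤ ‖f - r‖ - ‖f - (f + t • (p - f))‖ := by
        rw [hfg, norm_smul, Real.norm_of_nonneg ht0]; linarith [hp.2 r hr]
    _ ≤ ‖f + t • (p - f) - r‖ := by
        linarith [norm_sub_le_norm_sub_add_norm_sub f (f + t • (p - f)) r]

theorem IsBestApprox.half_smul_add {V : Submodule ℝ E} {g p r : E}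
    (hp : IsBestApprox V g p) (hr : IsBestApprox V g r) :
    IsBestApprox V g ((2⁻¹ : ℝ) • (p + r)) := by
  refine ⟨V.smul_mem _ (V.add_mem hp.1 hr.1), fun q hq => ?_⟩
  calc ‖g - (2⁻¹ : ℝ) • (p + r)‖ = ‖(2⁻¹ : ℝ) • ((g - p) + (g - r))‖ := by congr 1; module
    _ ≤ 2⁻¹ * (‖g - p‖ + ‖g - r‖) := by
        rw [norm_smul, Real.norm_of_nonneg (by norm_num)]
        exact mul_le_mul_of_nonneg_left (norm_add_le _ _) (by norm_num)
    _ ≤ ‖g - q‖ := by linarith [hp.2 q hq, hr.2 q hq]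

end BestApprox

theorem eq_of_abs_le_of_abs_half_add {a b d : ℝ} (ha : |a| ≤ d) (hb : |b| ≤ d)
    (hab : |2⁻¹ * (a + b)| = d) : a = b := by
  rw [abs_le] at ha hb
  rcases abs_eq_abs.mp (hab.trans (abs_of_nonneg (by linarith)).symm) with h | h <;> linarith

theorem abs_sub_lt_of_mul_pos {a b d : ℝ} (hab : 0 < a * b) (ha : |a| ≤ d) (hb : |b| < d) :
    |a - b| < d := by
  rw [abs_le] at ha
  rw [abs_lt] at hb ⊢
  rcases mul_pos_iff.mp hab with ⟨_, _⟩ | ⟨_, _⟩ <;> constructor <;> linarith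

section Compact

variable {K : Type*} [TopologicalSpace K] [CompactSpace K]

/-- Kolmogorov's criterion (sufficiency direction). -/
theorem ContinuousMap.exists_norm_sub_smul_lt (h s : C(K, ℝ)) (hh : h ≠ 0)
    (hs : ∀ x, |h x| = ‖h‖ → 0 < h x * s x) : ∃ c : ℝ, ‖h - c • s‖ < ‖h‖ := by
  have hd : 0 < ‖h‖ := norm_pos_iff.mpr hh
  have habs : ∀ x, |h x| ≤ ‖h‖ := h.norm_coe_le_norm
  set C := {x | h x * s x ≤ 0}
  have hC : IsCompact C :=
    (isClosed_le ((map_continuous h).mul (map_continuous s)) continuous_const).isCompact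
  obtain ⟨δ, hδ, hδC⟩ : ∃ δ, 0 < δ ∧ ∀ x ∈ C, δ ≤ ‖h‖ - |h x| :=
    hC.exists_forall_le' (by fun_prop) fun x hx =>
      sub_pos.mpr ((habs x).lt_of_ne fun hx' => (hs x hx').not_ge hx)
  set c := min δ ‖h‖ / (‖s‖ + 1)
  have hcs : ∀ x, |c * s x| < min δ ‖h‖ := fun x => by
    have : |s x| < ‖s‖ + 1 := (s.norm_coe_le_norm x).trans_lt (lt_add_one _)
    rw [abs_mul, abs_of_pos (by positivity), div_mul_eq_mul_div, div_lt_iff₀ (by positivity)]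
    exact mul_lt_mul_of_pos_left this (lt_min hδ hd)
  refine ⟨c, (ContinuousMap.norm_lt_iff _ hd).mpr fun x => ?_⟩
  simp only [ContinuousMap.sub_apply, ContinuousMap.smul_apply, smul_eq_mul, Real.norm_eq_abs]
  by_cases hx : x ∈ C
  · calc |h x - c * s x| ≤ |h x| + |c * s x| := abs_sub _ _
      _ < |h x| + δ := by linarith [hcs x, min_le_left δ ‖h‖]
      _ ≤ ‖h‖ := by linarith [hδC x hx]
  · have : 0 < h x * (c * s x) := by
      rw [mul_left_comm]; exact mul_pos (by positivity) (not_le.mp hx)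
    exact abs_sub_lt_of_mul_pos this (habs x) ((hcs x).trans_le (min_le_right _ _))

/-- A Haar-type condition; polynomials of degree `≤ n` satisfy it by Lagrange interpolation,
since a nonzero one has at most `n` zeros. -/
def InterpolatesOnZeros (V : Submodule ℝ C(K, ℝ)) : Prop :=
  ∀ v ∈ V, v ≠ 0 → ∀ w : K → ℝ, ∃ s ∈ V, ∀ x, v x = 0 → s x = w x

/-- Two best approximations `p ≠ r` would have a best approximation `m` as midpoint, whose
extremal points are zeros of `p - r`; interpolating `g - m` there gives a direction of descent. -/
theorem IsBestApprox.eq_of_interpolatesOnZeros {V : Submodule ℝ C(K, ℝ)}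
    (hV : InterpolatesOnZeros V) {g p r : C(K, ℝ)} (hp : IsBestApprox V g p)
    (hr : IsBestApprox V g r) : p = r := by
  by_contra hpr
  set m := (2⁻¹ : ℝ) • (p + r)
  have hm := hp.half_smul_add hr
  have hmp : ‖g - m‖ = ‖g - p‖ := hm.norm_sub_eq hp
  have hmr : ‖g - m‖ = ‖g - r‖ := hm.norm_sub_eq hr
  have hgm : g - m ≠ 0 := fun h0 => hpr <| by
    rw [h0, norm_zero, eq_comm, norm_eq_zero, sub_eq_zero] at hmp hmr
    rw [← hmp, ← hmr]
  have hzero : ∀ x, |(g - m) x| = ‖g - m‖ → (p - r) x = 0 := fun x hx => by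
    have hpt : (g - m) x = 2⁻¹ * ((g - p) x + (g - r) x) := by simp [m]; ring
    have := eq_of_abs_le_of_abs_half_add (hmp ▸ (g - p).norm_coe_le_norm x)
      (hmr ▸ (g - r).norm_coe_le_norm x) (hpt ▸ hx)
    simp only [ContinuousMap.sub_apply] at this ⊢
    linarith
  obtain ⟨s, hsV, hs⟩ := hV _ (V.sub_mem hp.1 hr.1) (sub_ne_zero.mpr hpr) (g - m)
  obtain ⟨c, hc⟩ := (g - m).exists_norm_sub_smul_lt s hgm fun x hx => by
    rw [hs x (hzero x hx)]
    exact mul_self_pos.mpr (abs_pos.mp (hx ▸ norm_pos_iff.mpr hgm))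
  have hbetter := hm.2 (m + c • s) (V.add_mem hm.1 (V.smul_mem c hsV))
  rw [sub_add_eq_sub_sub] at hbetter
  exact hc.not_ge hbetter

end Compact

noncomputable def polySubmodule (n : ℕ) : Submodule ℝ C(Icc (0 : ℝ) 1, ℝ) :=
  (degreeLE ℝ n).map (toContinuousMapOnAlgHom (Icc (0 : ℝ) 1)).toLinearMap

theorem coe_polySubmodule (n : ℕ) : (polySubmodule n : Set C(Icc (0 : ℝ) 1, ℝ)) = Pn n := by
  ext g
  simp [polySubmodule, Pn, mem_degreeLE, ← natDegree_le_iff_degree_le, ContinuousMap.ext_iff,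
    eq_comm]

theorem polySubmodule_interpolatesOnZeros (n : ℕ) : InterpolatesOnZeros (polySubmodule n) := by
  classical
  rintro _ ⟨q, hq, rfl⟩ hq0 w
  replace hq0 : q ≠ 0 := by rintro rfl; exact hq0 (map_zero _)
  rw [SetLike.mem_coe, mem_degreeLE] at hq
  set Z := q.roots.toFinset.subtype (· ∈ Icc (0 : ℝ) 1)
  have hinj : InjOn Subtype.val (Z : Set (Icc (0 : ℝ) 1)) := Subtype.val_injective.injOn
  have hZ : (Z.card : WithBot ℕ) ≤ n := by
    have : Z.card ≤ n := calc
      Z.card ≤ q.roots.toFinset.card :=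
        (Finset.card_subtype _ _).trans_le (Finset.card_filter_le _ _)
      _ ≤ q.roots.card := Multiset.toFinset_card_le _
      _ ≤ n := (card_roots' q).trans (natDegree_le_iff_degree_le.mpr hq)
    exact_mod_cast this
  refine ⟨toContinuousMapOnAlgHom _ (Lagrange.interpolate Z Subtype.val w),
    ⟨_, mem_degreeLE.mpr ((Lagrange.degree_interpolate_lt w hinj).trans_le hZ).le, rfl⟩,
    fun x hx => Lagrange.eval_interpolate_at_node w hinj ?_⟩
  simpa [Z, mem_roots hq0] using hx

theorem IsBestApprox.eq_of_Pn {n : ℕ} {g p r : C(Icc (0 : ℝ) 1, ℝ)}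
    (hp : IsBestApprox (Pn n) g p) (hr : IsBestApprox (Pn n) g r) : p = r := by
  rw [← coe_polySubmodule] at hp hr
  exact hp.eq_of_interpolatesOnZeros (polySubmodule_interpolatesOnZeros n) hr

section Coderivative

variable {E F : Type*} [NormedAddCommGroup E] [NormedSpace ℝ E] [NormedAddCommGroup F]
  [NormedSpace ℝ F]

noncomputable def frechetQuotient (P : E → F) (f : E) (φ : StrongDual ℝ E) (μ : StrongDual ℝ F)
    (g : E) : ℝ :=
  (φ (g - f) - μ (P g - P f)) / (‖g - f‖ + ‖P g - P f‖)

/-- Without this bound the `limsup` in `inCoderiv` would be the junk value `0`. -/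
theorem isBoundedUnder_le_frechetQuotient (P : E → F) (f : E) (φ : StrongDual ℝ E)
    (μ : StrongDual ℝ F) : IsBoundedUnder (· ≤ ·) (𝓝[≠] f) (frechetQuotient P f φ μ) := by
  refine isBoundedUnder_of_eventually_le (a := ‖φ‖ + ‖μ‖) ?_
  filter_upwards [self_mem_nhdsWithin] with g hg
  have hD : 0 < ‖g - f‖ + ‖P g - P f‖ :=
    add_pos_of_pos_of_nonneg (norm_pos_iff.mpr (sub_ne_zero.mpr hg)) (norm_nonneg _)
  rw [frechetQuotient, div_le_iff₀ hD]
  have hφ := (le_abs_self _).trans (φ.le_opNorm (g - f))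
  have hμ := (neg_le_abs _).trans (μ.le_opNorm (P g - P f))
  nlinarith [norm_nonneg φ, norm_nonneg μ, norm_nonneg (g - f), norm_nonneg (P g - P f)]

theorem limsup_frechetQuotient_pos (P : E → F) (f v : E) (φ : StrongDual ℝ E)
    (μ : StrongDual ℝ F) (hφv : 0 < φ v) (hP : ∀ᶠ t in 𝓝[>] (0 : ℝ), P (f + t • v) = P f) :
    0 < limsup (frechetQuotient P f φ μ) (𝓝[≠] f) := by
  have hv : v ≠ 0 := by rintro rfl; simp at hφv
  have hray : ∀ᶠ t in 𝓝[>] (0 : ℝ), frechetQuotient P f φ μ (f + t • v) = φ v / ‖v‖ := by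
    filter_upwards [hP, self_mem_nhdsWithin] with t hPt (ht : 0 < t)
    rw [frechetQuotient, hPt, sub_self, map_zero, norm_zero, add_sub_cancel_left, map_smul,
      norm_smul, Real.norm_of_nonneg ht.le, sub_zero, add_zero, smul_eq_mul,
      mul_div_mul_left _ _ ht.ne']
  have hto : Tendsto (fun t : ℝ => f + t • v) (𝓝[>] 0) (𝓝[≠] f) := by
    refine tendsto_nhdsWithin_of_tendsto_nhds_of_eventually_within _ ?_ ?_
    · exact ((by fun_prop : Continuous fun t : ℝ => f + t • v).tendsto' 0 f (by simp)).mono_left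
        nhdsWithin_le_nhds
    · filter_upwards [self_mem_nhdsWithin] with t (ht : 0 < t)
      simpa [ht.ne'] using hv
  refine (div_pos hφv (norm_pos_iff.mpr hv)).trans_le
    (le_limsup_of_frequently_le ?_ (isBoundedUnder_le_frechetQuotient P f φ μ))
  exact hto.frequently (hray.mono fun t ht => ht.ge).frequently

end Coderivative

/-- Let `P` be the metric projection of `C[0,1]` onto `𝒫ₙ`, `p = P f`, and let
`γ ∈ C*[0,1]` satisfy `⟨γ, f − p⟩ < 0`. Then `γ ∉ D̂*P(f)(μ)` for every `μ`. -/
theorem stmt_17 (n : ℕ) (P : C(Set.Icc (0 : ℝ) 1, ℝ) → C(Set.Icc (0 : ℝ) 1, ℝ))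
    (hP : ∀ g, P g ∈ Pn n ∧ ∀ r ∈ Pn n, ‖g - P g‖ ≤ ‖g - r‖)
    (f : C(Set.Icc (0 : ℝ) 1, ℝ))
    (γ : StrongDual ℝ C(Set.Icc (0 : ℝ) 1, ℝ))
    (hγ : γ (f - P f) < 0) :
    ∀ μ : StrongDual ℝ C(Set.Icc (0 : ℝ) 1, ℝ), ¬ inCoderiv P f μ γ := by
  intro μ hco
  have hconst : ∀ᶠ t in 𝓝[>] (0 : ℝ), P (f + t • (P f - f)) = P f := by
    filter_upwards [Ioo_mem_nhdsGT one_pos] with t ht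
    exact IsBestApprox.eq_of_Pn (hP _) (IsBestApprox.add_smul_sub (hP f) ht.1.le ht.2.le)
  have hγ' : 0 < γ (P f - f) := by
    rw [← neg_sub, map_neg]
    exact neg_pos.mpr hγ
  exact (limsup_frechetQuotient_pos P f _ γ μ hγ' hconst).not_ge hco
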